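/- In the game Nim^1_{3,=2}, let x = (x_1, x_2, x_3) be a position with 0 ≤ x_1 ≤ x_2 ≤ x_3 and x_1 = 1. Then G(x) = 0 and G⁻(x) = 1 if and only if x_2 = x_3 and x_2 is even, and G(x) = 1 and G⁻(x) = 0 if and only if x_2 = x_3 and x_2 is odd. -/
import Mathlib


/-- The minimum excludant of a set of natural numbers. -/
noncomputable def mex (S : Set ℕ) : ℕ := sInf {n : ℕ | n ∉ S}

/-- A move in slow exact 2-Nim on 3 piles `Nim¹_{3,=2}`: exactly two
strictly positive coordinates are decreased by one token. -/
def ExactMove (x y : Fin 3 → ℕ) : Prop :=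
  (∀ i, y i ≤ x i ∧ x i ≤ y i + 1) ∧
  (Finset.univ.filter fun i => y i < x i).card = 2

theorem ExactMove.sum_lt {x y : Fin 3 → ℕ} (h : ExactMove x y) :
    ∑ i, y i < ∑ i, x i := by
  obtain ⟨h1, h2⟩ := h
  obtain ⟨i, hi⟩ := Finset.card_pos.mp (h2 ▸ (by norm_num : (0:ℕ) < 2))
  rw [Finset.mem_filter] at hi
  exact Finset.sum_lt_sum (fun j _ => (h1 j).1) ⟨i, Finset.mem_univ i, hi.2⟩

/-- The normal-play Sprague–Grundy function of `Nim¹_{3,=2}`: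
`G(x) = mex {G(y) : y reachable from x in one move}`. -/
noncomputable def exactG (x : Fin 3 → ℕ) : ℕ :=
  mex (Set.range fun y : {y : Fin 3 → ℕ // ExactMove x y} => exactG y.1)
termination_by ∑ i, x i
decreasing_by exact y.2.sum_lt

open Classical in
/-- The misère Sprague–Grundy function of `Nim¹_{3,=2}`: the same `mex`
recursion at nonterminal positions, and value `1` at terminal positions. -/
noncomputable def exactGm (x : Fin 3 → ℕ) : ℕ :=
  if ∃ y, ExactMove x y then
    mex (Set.range fun y : {y : Fin 3 → ℕ // ExactMove x y} => exactGm y.1)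
  else 1
termination_by ∑ i, x i
decreasing_by exact y.2.sum_lt

lemma mex_eq {S : Set ℕ} {k : ℕ} (hk : k ∉ S) (h : ∀ j, j < k → j ∈ S) : mex S = k := by
  refine le_antisymm (Nat.sInf_le hk) ?_
  by_contra hc
  push_neg at hc
  exact Nat.sInf_mem (⟨k, hk⟩ : Set.Nonempty {n : ℕ | n ∉ S}) (h _ hc)

lemma exactMove_iff {x y : Fin 3 → ℕ} :
    ExactMove x y ↔ ∃ k : Fin 3, y k = x k ∧ ∀ i, i ≠ k → 0 < x i ∧ y i + 1 = x i := by
  constructor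
  · rintro ⟨h1, h2⟩
    have hcard : (Finset.univ.filter fun i => ¬ y i < x i).card = 1 := by
      have h3 := Finset.card_filter_add_card_filter_not
        (s := (Finset.univ : Finset (Fin 3))) (p := fun i => y i < x i)
      simp only [Finset.card_univ, Fintype.card_fin] at h3
      omega
    obtain ⟨k, hk⟩ := Finset.card_eq_one.mp hcard
    refine ⟨k, ?_, ?_⟩
    · have : k ∈ Finset.univ.filter fun i => ¬ y i < x i := hk ▸ Finset.mem_singleton_self k
      rw [Finset.mem_filter] at this
      exact le_antisymm (h1 k).1 (not_lt.mp this.2)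
    · intro i hi
      have : i ∉ Finset.univ.filter fun j => ¬ y j < x j := by
        rw [hk, Finset.mem_singleton]; exact hi
      rw [Finset.mem_filter] at this
      push_neg at this
      have hlt := this (Finset.mem_univ i)
      have := (h1 i).2
      constructor <;> omega
  · rintro ⟨k, hk, h⟩
    constructor
    · intro i
      by_cases hi : i = k
      · subst hi; omega
      · have := h i hi; omega
    · have : (Finset.univ.filter fun i => y i < x i) = Finset.univ.erase k := by
        ext i
        simp only [Finset.mem_filter, Finset.mem_univ, true_and, Finset.mem_erase, and_true]
        constructor
        · intro hlt hik; subst hik; omega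
        · intro hi; have := h i hi; omega
      rw [this, Finset.card_erase_of_mem (Finset.mem_univ k)]
      simp [Finset.card_univ]

lemma moves3 {a b c : ℕ} {y : Fin 3 → ℕ} (h : ExactMove ![a,b,c] y) :
    (0 < b ∧ 0 < c ∧ y = ![a, b-1, c-1]) ∨
    (0 < a ∧ 0 < c ∧ y = ![a-1, b, c-1]) ∨
    (0 < a ∧ 0 < b ∧ y = ![a-1, b-1, c]) := by
  obtain ⟨k, hk, hrest⟩ := exactMove_iff.mp h
  fin_cases k
  · left
    have hk' : y 0 = a := hk
    have h1 : 0 < b ∧ y 1 + 1 = b := hrest 1 (by decide)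
    have h2 : 0 < c ∧ y 2 + 1 = c := hrest 2 (by decide)
    refine ⟨by omega, by omega, ?_⟩
    funext i; fin_cases i
    · show y 0 = a; omega
    · show y 1 = b - 1; omega
    · show y 2 = c - 1; omega
  · right; left
    have hk' : y 1 = b := hk
    have h1 : 0 < a ∧ y 0 + 1 = a := hrest 0 (by decide)
    have h2 : 0 < c ∧ y 2 + 1 = c := hrest 2 (by decide)
    refine ⟨by omega, by omega, ?_⟩
    funext i; fin_cases i
    · show y 0 = a - 1; omega
    · show y 1 = b; omega
    · show y 2 = c - 1; omega
  · right; right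
    have hk' : y 2 = c := hk
    have h1 : 0 < a ∧ y 0 + 1 = a := hrest 0 (by decide)
    have h2 : 0 < b ∧ y 1 + 1 = b := hrest 1 (by decide)
    refine ⟨by omega, by omega, ?_⟩
    funext i; fin_cases i
    · show y 0 = a - 1; omega
    · show y 1 = b - 1; omega
    · show y 2 = c; omega

lemma mk_move0 {a b c : ℕ} (hb : 0 < b) (hc : 0 < c) :
    ExactMove ![a,b,c] ![a, b-1, c-1] := by
  refine exactMove_iff.mpr ⟨0, by simp, ?_⟩
  intro i hi
  fin_cases i
  · exact absurd rfl hi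
  · exact ⟨hb, by show b - 1 + 1 = b; omega⟩
  · exact ⟨hc, by show c - 1 + 1 = c; omega⟩

lemma mk_move1 {a b c : ℕ} (ha : 0 < a) (hc : 0 < c) :
    ExactMove ![a,b,c] ![a-1, b, c-1] := by
  refine exactMove_iff.mpr ⟨1, by simp, ?_⟩
  intro i hi
  fin_cases i
  · exact ⟨ha, by show a - 1 + 1 = a; omega⟩
  · exact absurd rfl hi
  · exact ⟨hc, by show c - 1 + 1 = c; omega⟩

lemma mk_move2 {a b c : ℕ} (ha : 0 < a) (hb : 0 < b) :
    ExactMove ![a,b,c] ![a-1, b-1, c] := by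
  refine exactMove_iff.mpr ⟨2, by simp, ?_⟩
  intro i hi
  fin_cases i
  · exact ⟨ha, by show a - 1 + 1 = a; omega⟩
  · exact ⟨hb, by show b - 1 + 1 = b; omega⟩
  · exact absurd rfl hi

lemma range_subtype {α : Type*} (P : α → Prop) (f : α → ℕ) :
    (Set.range fun y : {y // P y} => f y.1) = {v | ∃ y, P y ∧ f y = v} := by
  ext v
  constructor
  · rintro ⟨⟨y, hy⟩, rfl⟩; exact ⟨y, hy, rfl⟩
  · rintro ⟨y, hy, rfl⟩; exact ⟨⟨y, hy⟩, rfl⟩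

lemma exactG_eq (x : Fin 3 → ℕ) :
    exactG x = mex {v | ∃ y, ExactMove x y ∧ exactG y = v} := by
  rw [exactG, range_subtype]

lemma exactGm_eq (x : Fin 3 → ℕ) (h : ∃ y, ExactMove x y) :
    exactGm x = mex {v | ∃ y, ExactMove x y ∧ exactGm y = v} := by
  rw [exactGm, if_pos h, range_subtype]

lemma exactG_terminal (x : Fin 3 → ℕ) (h : ¬ ∃ y, ExactMove x y) : exactG x = 0 := by
  rw [exactG_eq]
  refine le_antisymm (Nat.sInf_le ?_) (Nat.zero_le _)
  rintro ⟨y, hy, -⟩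
  exact h ⟨y, hy⟩

lemma exactGm_terminal (x : Fin 3 → ℕ) (h : ¬ ∃ y, ExactMove x y) : exactGm x = 1 := by
  rw [exactGm, if_neg h]

lemma zeroTerm {b c : ℕ} (h : b = 0 ∨ c = 0) :
    exactG ![0,b,c] = 0 ∧ exactGm ![0,b,c] = 1 := by
  have hterm : ¬ ∃ y, ExactMove ![0,b,c] y := by
    rintro ⟨y, hy⟩
    rcases moves3 hy with ⟨h1,h2,-⟩|⟨h0,-,-⟩|⟨h0,-,-⟩ <;> omega
  exact ⟨exactG_terminal _ hterm, exactGm_terminal _ hterm⟩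

lemma oneTerm : exactG ![1,0,0] = 0 ∧ exactGm ![1,0,0] = 1 := by
  have hterm : ¬ ∃ y, ExactMove ![1,0,0] y := by
    rintro ⟨y, hy⟩
    rcases moves3 hy with ⟨h1,h2,-⟩|⟨-,h2,-⟩|⟨-,h2,-⟩ <;> omega
  exact ⟨exactG_terminal _ hterm, exactGm_terminal _ hterm⟩

lemma zeroVal (b c : ℕ) :
    exactG ![0,b,c] = min b c % 2 ∧ exactGm ![0,b,c] = 1 - min b c % 2 := by
  suffices H : ∀ n b c, b + c ≤ n →
      exactG ![0,b,c] = min b c % 2 ∧ exactGm ![0,b,c] = 1 - min b c % 2 from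
    H (b + c) b c le_rfl
  intro n
  induction n with
  | zero =>
    intro b c h
    have hb : b = 0 := by omega
    have := zeroTerm (b := b) (c := c) (Or.inl hb)
    have hmin : min b c = 0 := by omega
    rw [hmin]
    exact this
  | succ n ih =>
    intro b c h
    by_cases hbc : 0 < b ∧ 0 < c
    · obtain ⟨hb, hc⟩ := hbc
      have IH := ih (b-1) (c-1) (by omega)
      have huniq : ∀ y, ExactMove ![0,b,c] y → y = ![0, b-1, c-1] := by
        intro y hy
        rcases moves3 hy with ⟨-,-,rfl⟩|⟨h0,-,-⟩|⟨h0,-,-⟩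
        · rfl
        · omega
        · omega
      constructor
      · rw [exactG_eq]
        apply mex_eq
        · rintro ⟨y, hy, hv⟩
          rw [huniq y hy] at hv
          omega
        · intro j hj
          exact ⟨![0,b-1,c-1], mk_move0 hb hc, by omega⟩
      · rw [exactGm_eq _ ⟨_, mk_move0 hb hc⟩]
        apply mex_eq
        · rintro ⟨y, hy, hv⟩
          rw [huniq y hy] at hv
          omega
        · intro j hj
          exact ⟨![0,b-1,c-1], mk_move0 hb hc, by omega⟩
    · have hterm : b = 0 ∨ c = 0 := by omega
      have := zeroTerm hterm
      have hmin : min b c = 0 := by omega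
      rw [hmin]
      exact this

lemma oneZero {c : ℕ} (hc : 0 < c) :
    exactG ![1,0,c] = 1 ∧ exactGm ![1,0,c] = 0 := by
  have huniq : ∀ y, ExactMove ![1,0,c] y → y = ![1-1, 0, c-1] := by
    intro y hy
    rcases moves3 hy with ⟨h1,-,-⟩|⟨-,-,rfl⟩|⟨-,h1,-⟩
    · omega
    · rfl
    · omega
  have hz : exactG ![1-1, 0, c-1] = 0 ∧ exactGm ![1-1, 0, c-1] = 1 :=
    zeroTerm (b := 0) (c := c-1) (Or.inl rfl)
  have hmv : ExactMove ![1,0,c] ![1-1, 0, c-1] := mk_move1 one_pos hc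
  constructor
  · rw [exactG_eq]
    apply mex_eq
    · rintro ⟨y, hy, hv⟩
      rw [huniq y hy] at hv
      omega
    · intro j hj
      exact ⟨_, hmv, by omega⟩
  · rw [exactGm_eq _ ⟨_, hmv⟩]
    apply mex_eq
    · rintro ⟨y, hy, hv⟩
      rw [huniq y hy] at hv
      omega
    · intro j hj
      omega

lemma oneVal (b c : ℕ) (hb : 1 ≤ b) (hbc : b ≤ c) :
    (b = c → exactG ![1,b,c] = b % 2 ∧ exactGm ![1,b,c] = 1 - b % 2) ∧
    (b < c → exactG ![1,b,c] = 3 - b % 2 ∧ exactGm ![1,b,c] = 3 - b % 2) := by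
  suffices H : ∀ n b c, b + c ≤ n → 1 ≤ b → b ≤ c →
      (b = c → exactG ![1,b,c] = b % 2 ∧ exactGm ![1,b,c] = 1 - b % 2) ∧
      (b < c → exactG ![1,b,c] = 3 - b % 2 ∧ exactGm ![1,b,c] = 3 - b % 2) from
    H (b + c) b c le_rfl hb hbc
  clear hb hbc b c
  intro n
  induction n with
  | zero => intro b c h hb hbc; omega
  | succ n ih =>
    intro b c h hb hbc
    have hc : 0 < c := by omega
    have m2 : ExactMove ![1,b,c] ![1-1, b-1, c] := mk_move2 one_pos hb
    have m1 : ExactMove ![1,b,c] ![1-1, b, c-1] := mk_move1 one_pos hc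
    have m0 : ExactMove ![1,b,c] ![1, b-1, c-1] := mk_move0 hb hc
    have g2 : exactG ![1-1, b-1, c] = min (b-1) c % 2 ∧
        exactGm ![1-1, b-1, c] = 1 - min (b-1) c % 2 := zeroVal (b-1) c
    have g1 : exactG ![1-1, b, c-1] = min b (c-1) % 2 ∧
        exactGm ![1-1, b, c-1] = 1 - min b (c-1) % 2 := zeroVal b (c-1)
    constructor
    · -- diagonal case
      intro hdiag
      have g0 : exactG ![1, b-1, c-1] = (b-1) % 2 ∧
          exactGm ![1, b-1, c-1] = 1 - (b-1) % 2 := by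
        rcases Nat.eq_or_lt_of_le hb with h1 | h1
        · have hb1 : b = 1 := h1.symm
          have hc1 : c = 1 := by omega
          subst hb1; subst hc1
          exact oneTerm
        · have := (ih (b-1) (c-1) (by omega) (by omega) (by omega)).1 (by omega)
          omega
      constructor
      · rw [exactG_eq]
        apply mex_eq
        · rintro ⟨y, hy, hv⟩
          rcases moves3 hy with ⟨-,-,rfl⟩|⟨-,-,rfl⟩|⟨-,-,rfl⟩ <;> omega
        · intro j hj
          by_cases e2 : exactG ![1-1, b-1, c] = j
          · exact ⟨_, m2, e2⟩
          · exact ⟨_, m0, by omega⟩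
      · rw [exactGm_eq _ ⟨_, m0⟩]
        apply mex_eq
        · rintro ⟨y, hy, hv⟩
          rcases moves3 hy with ⟨-,-,rfl⟩|⟨-,-,rfl⟩|⟨-,-,rfl⟩ <;> omega
        · intro j hj
          by_cases e2 : exactGm ![1-1, b-1, c] = j
          · exact ⟨_, m2, e2⟩
          · exact ⟨_, m0, by omega⟩
    · -- off-diagonal case
      intro hlt
      have g0 : (b = 1 ∧ exactG ![1, b-1, c-1] = 1 ∧ exactGm ![1, b-1, c-1] = 0) ∨
          (2 ≤ b ∧ exactG ![1, b-1, c-1] = 3 - (b-1) % 2 ∧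
            exactGm ![1, b-1, c-1] = 3 - (b-1) % 2) := by
        rcases Nat.eq_or_lt_of_le hb with h1 | h1
        · left
          have hb1 : b = 1 := h1.symm
          subst hb1
          exact ⟨rfl, oneZero (by omega)⟩
        · right
          have := (ih (b-1) (c-1) (by omega) (by omega) (by omega)).2 (by omega)
          exact ⟨h1, this⟩
      constructor
      · rw [exactG_eq]
        apply mex_eq
        · rintro ⟨y, hy, hv⟩
          rcases moves3 hy with ⟨-,-,rfl⟩|⟨-,-,rfl⟩|⟨-,-,rfl⟩ <;> omega
        · intro j hj
          by_cases e2 : exactG ![1-1, b-1, c] = j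
          · exact ⟨_, m2, e2⟩
          by_cases e1 : exactG ![1-1, b, c-1] = j
          · exact ⟨_, m1, e1⟩
          · exact ⟨_, m0, by omega⟩
      · rw [exactGm_eq _ ⟨_, m0⟩]
        apply mex_eq
        · rintro ⟨y, hy, hv⟩
          rcases moves3 hy with ⟨-,-,rfl⟩|⟨-,-,rfl⟩|⟨-,-,rfl⟩ <;> omega
        · intro j hj
          by_cases e2 : exactGm ![1-1, b-1, c] = j
          · exact ⟨_, m2, e2⟩
          by_cases e1 : exactGm ![1-1, b, c-1] = j
          · exact ⟨_, m1, e1⟩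
          · exact ⟨_, m0, by omega⟩


/-- In `Nim¹_{3,=2}`, a nondecreasing position with smallest coordinate `1`
is a `(0,1)`-position iff `x₂ = x₃` is even, and a `(1,0)`-position iff
`x₂ = x₃` is odd. -/
theorem stmt14 (x : Fin 3 → ℕ) (h01 : x 0 ≤ x 1) (h12 : x 1 ≤ x 2)
    (h0 : x 0 = 1) :
    ((exactG x = 0 ∧ exactGm x = 1) ↔ (x 1 = x 2 ∧ Even (x 1))) ∧
    ((exactG x = 1 ∧ exactGm x = 0) ↔ (x 1 = x 2 ∧ Odd (x 1))) := by
  have hx : x = ![1, x 1, x 2] := by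
    funext i
    fin_cases i
    · exact h0
    · rfl
    · rfl
  have key := oneVal (x 1) (x 2) (h0 ▸ h01) h12
  rw [← hx] at key
  obtain ⟨kd, ko⟩ := key
  simp only [Nat.even_iff, Nat.odd_iff]
  rcases eq_or_lt_of_le h12 with hd | hl
  · obtain ⟨hG, hGm⟩ := kd hd
    rw [hG, hGm]
    omega
  · obtain ⟨hG, hGm⟩ := ko hl
    rw [hG, hGm]
    omega
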